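/- Let n ≥ 6 and let r be an integer with r ≥ 3 and 2r ≤ n. Then in S_n the following exchange law holds: v_{2r} · u_{2r} = ∏_{i=2}^{r-1} (u_{2i} · t_{2i+1}^{-1}) · u_{2r} · v_{2r}, where the product is taken over i = 2, 3, ..., r-1 in increasing order. -/

import Mathlib

/- We work in the symmetric group on `Fin n` (representing `{1, ..., n}` via `i ↦ i - 1`).
The paper multiplies permutations left-to-right: `(π₁ · π₂)(i) = π₂(π₁(i))`,
while Mathlib's `*` on `Equiv.Perm` is function composition: `(π₁ * π₂)(i) = π₁(π₂(i))`.
Hence a paper product `A · B · C` is rendered below as `C * B * A`. -/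

/-- `sP n i` is the transposition `sᵢ = (i, i+1)` (1-indexed), for `1 ≤ i ≤ n - 1`. -/
def sP (n i : ℕ) : Equiv.Perm (Fin n) :=
  if h : 1 ≤ i ∧ i < n then
    Equiv.swap ⟨i - 1, lt_of_le_of_lt (Nat.sub_le i 1) h.2⟩ ⟨i, h.2⟩
  else 1

/-- `tP n m` is `t_m = s₁ · s₂ ⋯ s_{m-1}` (paper's left-to-right product, so here the
factor for larger index is multiplied on the left).  `tP n 0 = tP n 1 = 1`. -/
def tP (n m : ℕ) : Equiv.Perm (Fin n) :=
  (List.range (m - 1)).foldl (fun g j => sP n (j + 1) * g) 1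

/-- `uP n r` is `u_{2r} = t_{2r-2} · s_{2r-1}` (paper order; here reversed). -/
def uP (n r : ℕ) : Equiv.Perm (Fin n) := sP n (2 * r - 1) * tP n (2 * r - 2)

/-- `vP n r` is `v_{2r} = t_{2r}²`. -/
def vP (n r : ℕ) : Equiv.Perm (Fin n) := (tP n (2 * r)) ^ 2

/-!
Write `κ_r = v_{2r} · u_{2r} · v_{2r}⁻¹` (paper order). The exchange law says `κ_r = P_r · u_{2r}`,
where `P_r` is the product on the right. All permutations involved have explicit piecewise-affine
descriptions on `{1, …, n}`: `κ_r` swaps `1` and `2`, sends `3` to `2r` and `k` to `k - 1` for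
`4 ≤ k ≤ 2r`. Reading these off gives `κ_2 = u_4`, and `κ_r · t_{2r+1}⁻¹` is the 3-cycle
`(1 3 2r+1)`, whence `κ_{r+1} = κ_r · t_{2r+1}⁻¹ · u_{2r+2}`. This is exactly how `P_{r+1} · u_{2r+2}`
arises from `P_r · u_{2r}`, so induction on `r` concludes.
-/

lemma sP_apply_val (n i : ℕ) (h1 : 1 ≤ i) (h2 : i < n) (x : Fin n) :
    (sP n i x).val = if x.val = i - 1 then i else if x.val = i then i - 1 else x.val := by
  simp only [sP, dif_pos (And.intro h1 h2), Equiv.swap_apply_def, Fin.ext_iff]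
  split_ifs <;> simp_all

lemma tP_succ (n m : ℕ) : tP n (m + 1) = sP n m * tP n m := by
  rcases m with _ | k
  · simp [tP, sP]
  · simp [tP, List.range_succ]

lemma tP_apply_val (n m : ℕ) (hm : m ≤ n) (x : Fin n) :
    (tP n m x).val =
      if 1 ≤ x.val ∧ x.val < m then x.val - 1
      else if x.val = 0 ∧ 2 ≤ m then m - 1
      else x.val := by
  induction m with
  | zero =>
    simp only [tP, Nat.zero_sub, List.range_zero, List.foldl_nil, Equiv.Perm.one_apply]
    split_ifs <;> omega
  | succ m ih =>
    rcases Nat.eq_zero_or_pos m with rfl | hm1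
    · simp only [tP, Nat.sub_self, List.range_zero, List.foldl_nil, Equiv.Perm.one_apply]
      split_ifs <;> omega
    · rw [tP_succ n m, Equiv.Perm.mul_apply, sP_apply_val n m hm1 (by omega), ih (by omega)]
      split_ifs <;> omega

lemma tP_inv_apply_val (n m : ℕ) (hm : m ≤ n) (x : Fin n) :
    ((tP n m)⁻¹ x).val =
      if x.val + 2 ≤ m then x.val + 1
      else if x.val + 1 = m ∧ 2 ≤ m then 0
      else x.val := by
  have h := tP_apply_val n m hm ((tP n m)⁻¹ x)
  rw [← Equiv.Perm.mul_apply, mul_inv_cancel, Equiv.Perm.one_apply] at h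
  have := x.isLt
  split_ifs at h ⊢ <;> omega

lemma uP_apply_val (n r : ℕ) (hr : 2 ≤ r) (h : 2 * r ≤ n) (x : Fin n) :
    (uP n r x).val =
      if x.val = 0 then 2 * r - 3
      else if x.val ≤ 2 * r - 3 then x.val - 1
      else if x.val = 2 * r - 2 then 2 * r - 1
      else if x.val = 2 * r - 1 then 2 * r - 2
      else x.val := by
  rw [uP, Equiv.Perm.mul_apply, sP_apply_val n (2 * r - 1) (by omega) (by omega),
    tP_apply_val n (2 * r - 2) (by omega)]
  split_ifs <;> omega

lemma vP_apply_val (n r : ℕ) (hr : 1 ≤ r) (h : 2 * r ≤ n) (x : Fin n) :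
    (vP n r x).val =
      if x.val = 0 then 2 * r - 2
      else if x.val = 1 then 2 * r - 1
      else if x.val ≤ 2 * r - 1 then x.val - 2
      else x.val := by
  rw [vP, sq, Equiv.Perm.mul_apply, tP_apply_val n (2 * r) h, tP_apply_val n (2 * r) h]
  have := x.isLt
  have := (tP n (2 * r) x).isLt
  split_ifs <;> omega

lemma vP_inv_apply_val (n r : ℕ) (hr : 1 ≤ r) (h : 2 * r ≤ n) (x : Fin n) :
    ((vP n r)⁻¹ x).val =
      if x.val + 3 ≤ 2 * r then x.val + 2
      else if x.val + 2 = 2 * r then 0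
      else if x.val + 1 = 2 * r then 1
      else x.val := by
  have h := vP_apply_val n r hr h ((vP n r)⁻¹ x)
  rw [← Equiv.Perm.mul_apply, mul_inv_cancel, Equiv.Perm.one_apply] at h
  have := x.isLt
  split_ifs at h ⊢ <;> omega

lemma conj_uP_apply_val (n r : ℕ) (hr : 2 ≤ r) (h : 2 * r ≤ n) (x : Fin n) :
    (((vP n r)⁻¹ * uP n r * vP n r) x).val =
      if x.val = 0 then 1
      else if x.val = 1 then 0
      else if x.val = 2 then 2 * r - 1
      else if x.val ≤ 2 * r - 1 then x.val - 1
      else x.val := by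
  have hv := vP_apply_val n r (by omega) h x
  have huv := uP_apply_val n r hr h (vP n r x)
  have hvuv := vP_inv_apply_val n r (by omega) h (uP n r (vP n r x))
  have := x.isLt
  rw [Equiv.Perm.mul_apply, Equiv.Perm.mul_apply, hvuv]
  split_ifs at hv huv ⊢ <;> omega

lemma conj_uP_two (n : ℕ) (h : 4 ≤ n) : (vP n 2)⁻¹ * uP n 2 * vP n 2 = uP n 2 := by
  ext x
  rw [conj_uP_apply_val n 2 le_rfl h, uP_apply_val n 2 le_rfl h]
  split_ifs <;> omega

lemma tP_inv_mul_conj_uP_apply_val (n r : ℕ) (hr : 2 ≤ r) (h : 2 * r + 1 ≤ n) (x : Fin n) :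
    (((tP n (2 * r + 1))⁻¹ * ((vP n r)⁻¹ * uP n r * vP n r)) x).val =
      if x.val = 0 then 2
      else if x.val = 2 then 2 * r
      else if x.val = 2 * r then 0
      else x.val := by
  rw [Equiv.Perm.mul_apply, tP_inv_apply_val n (2 * r + 1) h, conj_uP_apply_val n r hr (by omega)]
  split_ifs <;> omega

lemma conj_uP_succ (n r : ℕ) (hr : 2 ≤ r) (h : 2 * r + 2 ≤ n) :
    (vP n (r + 1))⁻¹ * uP n (r + 1) * vP n (r + 1) =
      uP n (r + 1) * ((tP n (2 * r + 1))⁻¹ * ((vP n r)⁻¹ * uP n r * vP n r)) := by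
  ext x
  rw [conj_uP_apply_val n (r + 1) (by omega) h, Equiv.Perm.mul_apply,
    uP_apply_val n (r + 1) (by omega) h, tP_inv_mul_conj_uP_apply_val n r hr (by omega)]
  have := x.isLt
  split_ifs <;> first | contradiction | omega

lemma foldl_range_succ_mul_left {M : Type*} [Monoid M] (f : ℕ → M) (a : M) (k : ℕ) :
    (List.range (k + 1)).foldl (fun acc j => f j * acc) a =
      f k * (List.range k).foldl (fun acc j => f j * acc) a := by
  simp [List.range_succ]

lemma conj_uP_eq_mul_foldl (n r : ℕ) (hr : 2 ≤ r) (h : 2 * r ≤ n) :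
    (vP n r)⁻¹ * uP n r * vP n r =
      uP n r * (List.range (r - 2)).foldl
        (fun acc j => (tP n (2 * (j + 2) + 1))⁻¹ * uP n (j + 2) * acc) 1 := by
  induction r, hr using Nat.le_induction with
  | base => simpa using conj_uP_two n h
  | succ r hr ih =>
    rw [show r + 1 - 2 = r - 2 + 1 by omega, foldl_range_succ_mul_left, show r - 2 + 2 = r by omega,
      conj_uP_succ n r hr h, ih (by omega)]
    simp only [mul_assoc]

theorem vu_exchange_general (n r : ℕ) (hr : 3 ≤ r) (hrn : 2 * r ≤ n) :
    uP n r * vP n r =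
      vP n r * uP n r *
        (List.range (r - 2)).foldl
          (fun acc j => (tP n (2 * (j + 2) + 1))⁻¹ * uP n (j + 2) * acc) 1 := by
  rw [mul_assoc (vP n r), ← conj_uP_eq_mul_foldl n r (by omega) hrn]
  group

/-- for `r ≥ 3` with `2r ≤ n`,
`v_{2r} · u_{2r} = ∏_{i=2}^{r-1} (u_{2i} · t_{2i+1}⁻¹) · u_{2r} · v_{2r}` (paper
left-to-right product over `i` increasing; rendered here in composition order, i.e.
everything reversed).  The index `j ∈ range (r-2)` corresponds to `i = j + 2`. -/
theorem vu_exchange (n r : ℕ) (hn : 6 ≤ n) (hr : 3 ≤ r) (hrn : 2 * r ≤ n) :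
    uP n r * vP n r =
      vP n r * uP n r *
        (List.range (r - 2)).foldl
          (fun acc j => (tP n (2 * (j + 2) + 1))⁻¹ * uP n (j + 2) * acc) 1 :=
  vu_exchange_general n r hr hrn
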